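/- arXiv:math/0703045 — 3 statements merged into one kernel-verified Lean document; each statement's English description precedes it below -/
import Mathlib

section
/- If q ∈ R_B and q' ⊆ q is countable, then there exist a sequence ā ∈ ^{ω≥}B (possibly countably infinite) and a sequence ⟨ψ_n(x,ā) : n < ω⟩ of finite conjunctions of members of q such that: (α) p*(x) ∪ {ψ_n(x,ā) : n < ω} ⊢ q'(x); (β) ψ_{n+1}(x,ā) ⊢ ψ_n(x,ā); (δ) p*(x) ∪ p*(y) ∪ {ψ_{n+1}(x,ā), ψ_{n+1}(y,ā)} ⊢ ψ_n(x·y, ā) ∧ ψ_n(x⁻¹, ā) ∧ ψ_n(x·y⁻¹, ā). -/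
open FirstOrder Cardinal Set

universe u

namespace Paper886

section Basic

variable (L : FirstOrder.Language.{u, u}) (M : Type u) [L.Structure M]

/-- A first-order formula in `n` object variables together with a finite tuple of
parameters from `M`. -/
structure ParamFormula (n : ℕ) : Type u where
  m : ℕ
  toFormula : L.Formula (Fin n ⊕ Fin m)
  params : Fin m → M

variable {L M}

/-- Realization of a parametrized formula at a tuple. -/
def ParamFormula.Realize {n : ℕ} (f : ParamFormula L M n) (v : Fin n → M) : Prop :=
  f.toFormula.Realize (Sum.elim v f.params)

/-- The parameters of `f` all lie in `B`. -/
def ParamFormula.paramsIn {n : ℕ} (f : ParamFormula L M n) (B : Set M) : Prop :=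
  ∀ i, f.params i ∈ B

/-- The set of realizations of a partial 1-type. -/
def realizeSet (p : Set (ParamFormula L M 1)) : Set M :=
  {a | ∀ f ∈ p, f.Realize fun _ => a}

/-- The partial type `p` is over the parameter set `B`. -/
def IsTypeOver (p : Set (ParamFormula L M 1)) (B : Set M) : Prop :=
  ∀ f ∈ p, f.paramsIn B

variable (L) in
/-- Two tuples realize the same type over a set `A` of parameters. -/
def SameType {α : Type u} (A : Set M) (a b : α → M) : Prop :=
  ∀ (n mp : ℕ) (φ : L.Formula (Fin n ⊕ Fin mp)) (vs : Fin n → α) (ps : Fin mp → M),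
    (∀ i, ps i ∈ A) →
      (φ.Realize (Sum.elim (fun i => a (vs i)) ps) ↔ φ.Realize (Sum.elim (fun i => b (vs i)) ps))

variable (L M)

/-- `M` is `κ`-saturated: every finitely satisfiable 1-type over fewer than `κ`
parameters is realized in `M`. -/
def Saturated (κ : Cardinal.{u}) : Prop :=
  ∀ B : Set M, #B < κ → ∀ p : Set (ParamFormula L M 1), IsTypeOver p B →
    (∀ s : Set (ParamFormula L M 1), s ⊆ p → s.Finite → ∃ a : M, ∀ f ∈ s, f.Realize fun _ => a) →
    ∃ a : M, a ∈ realizeSet p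

/-- `Th(M)` is dependent (NIP): no formula has the independence property, where consistency
of a pattern is rendered as finite satisfiability in the (saturated) monster. -/
def IsDependent : Prop :=
  ∀ (nx np : ℕ) (φ : L.Formula (Fin nx ⊕ Fin np)) (a : ℕ → Fin np → M),
    ¬ ∀ (u : Set ℕ) (s : Finset ℕ), ∃ x : Fin nx → M,
        ∀ i ∈ s, (φ.Realize (Sum.elim x (a i)) ↔ i ∈ u)

variable {L M}

/-- The cardinality `|T|` of the (complete) theory of `M`. -/
noncomputable def theoryCard (L : FirstOrder.Language.{u, u}) : Cardinal.{u} :=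
  ℵ₀ ⊔ L.card

variable (L M)

/-- A type-definable group: a partial type `p*` over `A*` together with definitions
(over `A*`) of the group operations making `p*(𝔠)` a group. -/
structure DefGroup : Type u where
  AStar : Set M
  pStar : Set (ParamFormula L M 1)
  pStar_over : IsTypeOver pStar AStar
  mul : M → M → M
  inv : M → M
  one : M
  mul_definable : ∃ φ : ParamFormula L M 3, φ.paramsIn AStar ∧
    ∀ x y z : M, (φ.Realize ![x, y, z] ↔ mul x y = z)
  inv_definable : ∃ φ : ParamFormula L M 2, φ.paramsIn AStar ∧
    ∀ x y : M, (φ.Realize ![x, y] ↔ inv x = y)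
  one_definable : ∃ φ : ParamFormula L M 1, φ.paramsIn AStar ∧
    ∀ x : M, (φ.Realize ![x] ↔ x = one)
  one_mem' : one ∈ realizeSet pStar
  mul_mem' : ∀ x ∈ realizeSet pStar, ∀ y ∈ realizeSet pStar, mul x y ∈ realizeSet pStar
  inv_mem' : ∀ x ∈ realizeSet pStar, inv x ∈ realizeSet pStar
  mul_assoc' : ∀ x ∈ realizeSet pStar, ∀ y ∈ realizeSet pStar, ∀ z ∈ realizeSet pStar,
    mul (mul x y) z = mul x (mul y z)
  one_mul' : ∀ x ∈ realizeSet pStar, mul one x = x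
  mul_one' : ∀ x ∈ realizeSet pStar, mul x one = x
  inv_mul' : ∀ x ∈ realizeSet pStar, mul (inv x) x = one
  mul_inv' : ∀ x ∈ realizeSet pStar, mul x (inv x) = one

variable {L M}

namespace DefGroup

variable (D : DefGroup L M)

/-- The underlying set of the group `G = p*(𝔠)`. -/
def carrier : Set M := realizeSet D.pStar

/-- `G` is abelian. -/
def IsAbelian : Prop := ∀ x ∈ D.carrier, ∀ y ∈ D.carrier, D.mul x y = D.mul y x

/-- `H` is a subgroup of `G`. -/
def IsSubgroup (H : Set M) : Prop :=
  H ⊆ D.carrier ∧ D.one ∈ H ∧ (∀ x ∈ H, ∀ y ∈ H, D.mul x y ∈ H) ∧ ∀ x ∈ H, D.inv x ∈ H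

/-- `(G : H) ≤ c`: at most `c` left cosets of `H` cover `G`. -/
def indexLE (H : Set M) (c : Cardinal.{u}) : Prop :=
  ∃ S : Set M, S ⊆ D.carrier ∧ #S ≤ c ∧ ∀ g ∈ D.carrier, ∃ s ∈ S, D.mul (D.inv s) g ∈ H

/-- `(G : H) < c`: fewer than `c` left cosets of `H` cover `G`. -/
def indexLT (H : Set M) (c : Cardinal.{u}) : Prop :=
  ∃ S : Set M, S ⊆ D.carrier ∧ #S < c ∧ ∀ g ∈ D.carrier, ∃ s ∈ S, D.mul (D.inv s) g ∈ H

/-- The realization set of the partial type `q^n_Γ`. -/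
def qSet (Γ : Set (ParamFormula L M 1)) (n : ℕ) : Set M :=
  {c | ∃ d : Fin n → M × M,
    (∀ ℓ, (d ℓ).1 ∈ D.carrier ∧ (d ℓ).2 ∈ D.carrier) ∧
    (∀ ℓ, ∀ f ∈ Γ, (f.Realize fun _ => (d ℓ).1) ↔ (f.Realize fun _ => (d ℓ).2)) ∧
    c = (List.ofFn fun ℓ => D.mul (D.inv (d ℓ).1) (d ℓ).2).foldr D.mul D.one}

/-- The realization set of `q^n_{ā}`, i.e. `q^n_{Γ_ā}` where `Γ_ā` consists of all
formulas with parameters in the range of `ā`. -/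
def qTupleSet {α : Type u} (a : α → M) (n : ℕ) : Set M :=
  D.qSet {f : ParamFormula L M 1 | f.paramsIn (Set.range a)} n

end DefGroup

end Basic

variable {L : FirstOrder.Language.{u, u}} {M : Type u} [L.Structure M]

variable (L) in
/-- `X` is the union of fewer than `κ` realization sets of types over `B`. -/
def UnionTypeDefOver (X B : Set M) (κ : Cardinal.{u}) : Prop :=
  ∃ ι : Type u, #ι < κ ∧ ∃ P : ι → Set (ParamFormula L M 1),
    (∀ i, IsTypeOver (P i) B) ∧ X = ⋃ i, realizeSet (P i)

variable (L) in
/-- `X` is union-type-definable (with fewer than `κ` parameters altogether). -/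
def UnionTypeDefinable (X : Set M) (κ : Cardinal.{u}) : Prop :=
  ∃ B : Set M, #B < κ ∧ UnionTypeDefOver L X B κ

/-- `G_q = (p* ∪ q)(𝔠)`. -/
def Gq (D : DefGroup L M) (q : Set (ParamFormula L M 1)) : Set M :=
  realizeSet (D.pStar ∪ q)

/-- `R_B`: the family of 1-types `q` over `B` such that `G_q` is a subgroup of `G`
of index `< κ`. -/
def RB (D : DefGroup L M) (κ : Cardinal.{u}) (B : Set M) : Set (Set (ParamFormula L M 1)) :=
  {q | IsTypeOver q B ∧ D.IsSubgroup (Gq D q) ∧ D.indexLT (Gq D q) κ}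

/-- `q_B`, the union of all members of `R_B`. -/
def qB (D : DefGroup L M) (κ : Cardinal.{u}) (B : Set M) : Set (ParamFormula L M 1) :=
  ⋃₀ RB D κ B

/-- `G_B = q_B(𝔠) ∩ G`. -/
def GB (D : DefGroup L M) (κ : Cardinal.{u}) (B : Set M) : Set M :=
  realizeSet (qB D κ B) ∩ D.carrier

/-- The complete type of `a` over `A` (as the set of all param-formulas over `A`
satisfied by `a`). -/
def typeOf (A : Set M) (a : M) : Set (ParamFormula L M 1) :=
  {f | f.paramsIn A ∧ f.Realize fun _ => a}

/-- `φ(x̄, ȳ₀, …, ȳ_{k-1})` is `k`-independent: for every index set of size `< κ` there is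
an array of parameter tuples such that every pattern on `^k ι` is (finitely) satisfiable. -/
def FormulaKIndep (M : Type u) [L.Structure M] (κ : Cardinal.{u}) (k nx : ℕ) (ny : Fin k → ℕ)
    (φ : L.Formula (Fin nx ⊕ ((ℓ : Fin k) × Fin (ny ℓ)))) : Prop :=
  ∀ ι : Type u, #ι < κ →
    ∃ a : (ℓ : Fin k) → ι → Fin (ny ℓ) → M,
      ∀ (u : Set (Fin k → ι)) (s : Finset (Fin k → ι)),
        ∃ x : Fin nx → M,
          ∀ η ∈ s, ((φ.Realize (Sum.elim x fun p => a p.1 (η p.1) p.2)) ↔ η ∈ u)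

/-- `Th(M)` is `k`-independent. -/
def KIndependent (L : FirstOrder.Language.{u, u}) (M : Type u) [L.Structure M] (κ : Cardinal.{u})
    (k : ℕ) : Prop :=
  ∃ (nx : ℕ) (ny : Fin k → ℕ) (φ : L.Formula (Fin nx ⊕ ((ℓ : Fin k) × Fin (ny ℓ)))),
    FormulaKIndep M κ k nx ny φ

/-- `Th(M)` is `k`-dependent. -/
def KDependent (L : FirstOrder.Language.{u, u}) (M : Type u) [L.Structure M] (κ : Cardinal.{u})
    (k : ℕ) : Prop :=
  ¬ KIndependent L M κ k


section Combinators

variable {L : FirstOrder.Language.{u, u}} {M : Type u} [L.Structure M]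

namespace ParamFormula

variable {n k : ℕ}

/-- The trivially true parametrized formula. -/
def pTop : ParamFormula L M n := ⟨0, ⊤, finZeroElim⟩

@[simp] lemma realize_pTop {v : Fin n → M} : (pTop : ParamFormula L M n).Realize v := by
  simp [pTop, Realize]

lemma paramsIn_pTop {S : Set M} : (pTop : ParamFormula L M n).paramsIn S := fun i => i.elim0

/-- Conjunction of two parametrized formulas. -/
def pand (f g : ParamFormula L M n) : ParamFormula L M n where
  m := f.m + g.m
  toFormula := (f.toFormula.relabel (Sum.map id (Fin.castAdd g.m))) ⊓
    (g.toFormula.relabel (Sum.map id (Fin.natAdd f.m)))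
  params := Fin.append f.params g.params

lemma realize_pand {f g : ParamFormula L M n} {v : Fin n → M} :
    (f.pand g).Realize v ↔ f.Realize v ∧ g.Realize v := by
  have h1 : Sum.elim v (Fin.append f.params g.params) ∘ Sum.map id (Fin.castAdd g.m)
      = Sum.elim v f.params := by
    funext s; cases s with
    | inl i => rfl
    | inr j => simp [Fin.append_left]
  have h2 : Sum.elim v (Fin.append f.params g.params) ∘ Sum.map id (Fin.natAdd f.m)
      = Sum.elim v g.params := by
    funext s; cases s with
    | inl i => rfl
    | inr j => simp [Fin.append_right]
  simp only [pand, Realize, FirstOrder.Language.Formula.realize_inf,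
    FirstOrder.Language.Formula.realize_relabel, h1, h2]

lemma paramsIn_pand {f g : ParamFormula L M n} {S : Set M} (hf : f.paramsIn S)
    (hg : g.paramsIn S) : (f.pand g).paramsIn S := by
  intro i
  induction i using Fin.addCases with
  | left i => simpa [pand, Fin.append_left] using hf i
  | right i => simpa [pand, Fin.append_right] using hg i

/-- Negation of a parametrized formula. -/
def pnot (f : ParamFormula L M n) : ParamFormula L M n := ⟨f.m, f.toFormula.not, f.params⟩

lemma realize_pnot {f : ParamFormula L M n} {v : Fin n → M} :
    (f.pnot).Realize v ↔ ¬ f.Realize v := by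
  simp [pnot, Realize]

lemma paramsIn_pnot {f : ParamFormula L M n} {S : Set M} (hf : f.paramsIn S) :
    (f.pnot).paramsIn S := hf

/-- Reindexing of object variables. -/
def reindex (σ : Fin k → Fin n) (f : ParamFormula L M k) : ParamFormula L M n :=
  ⟨f.m, f.toFormula.relabel (Sum.map σ id), f.params⟩

lemma realize_reindex {σ : Fin k → Fin n} {f : ParamFormula L M k} {v : Fin n → M} :
    (reindex σ f).Realize v ↔ f.Realize (v ∘ σ) := by
  have h : Sum.elim v f.params ∘ Sum.map σ id = Sum.elim (v ∘ σ) f.params := by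
    funext s; cases s <;> rfl
  simp only [reindex, Realize, FirstOrder.Language.Formula.realize_relabel, h]

lemma paramsIn_reindex {σ : Fin k → Fin n} {f : ParamFormula L M k} {S : Set M}
    (hf : f.paramsIn S) : (reindex σ f).paramsIn S := hf

/-- Existential quantification over the last object variable. -/
def exLast (f : ParamFormula L M (n + 1)) : ParamFormula L M n :=
  ⟨f.m, (FirstOrder.Language.BoundedFormula.relabel
      (Sum.elim (Fin.lastCases (Sum.inr 0) (fun i => Sum.inl (Sum.inl i)))
        (fun j => Sum.inl (Sum.inr j)) :
          (Fin (n + 1) ⊕ Fin f.m) → (Fin n ⊕ Fin f.m) ⊕ Fin 1)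
      f.toFormula).ex, f.params⟩

lemma realize_zero_congr {α : Type*} {φ : L.BoundedFormula α 0} {v : α → M}
    {xs ys : Fin 0 → M} (h : φ.Realize v xs) : φ.Realize v ys := by
  rwa [Subsingleton.elim ys xs]

lemma realize_exLast {f : ParamFormula L M (n + 1)} {v : Fin n → M} :
    (exLast f).Realize v ↔ ∃ z : M, f.Realize (Fin.snoc v z) := by
  have hsnoc : ∀ (z : M) (j : Fin (0 + 1)), (Fin.snoc (default : Fin 0 → M) z : Fin (0 + 1) → M) j = z := by
    intro z j
    have hj : j = Fin.last 0 := Subsingleton.elim (α := Fin 1) j (Fin.last 0)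
    rw [hj, Fin.snoc_last]
  have hval : ∀ (z : M) (xs : Fin (1 + 0) → M), xs = (fun _ => z) →
      (Sum.elim (Sum.elim v f.params) (xs ∘ Fin.castAdd 0) ∘
        (Sum.elim (Fin.lastCases (Sum.inr 0) (fun i => Sum.inl (Sum.inl i)))
          (fun j => Sum.inl (Sum.inr j)) :
            (Fin (n + 1) ⊕ Fin f.m) → (Fin n ⊕ Fin f.m) ⊕ Fin 1))
      = Sum.elim (Fin.snoc v z) f.params := by
    intro z xs hxs; subst hxs
    funext s
    cases s with
    | inl i =>
      induction i using Fin.lastCases with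
      | last => simp
      | cast i => simp
    | inr j => simp
  constructor
  · intro h
    rw [exLast, Realize] at h
    obtain ⟨z, hz⟩ := FirstOrder.Language.BoundedFormula.realize_ex.mp h
    rw [FirstOrder.Language.BoundedFormula.realize_relabel,
      hval z _ (funext fun i => hsnoc z i)] at hz
    refine ⟨z, ?_⟩
    show FirstOrder.Language.BoundedFormula.Realize f.toFormula
      (Sum.elim (Fin.snoc v z) f.params) default
    exact realize_zero_congr hz
  · rintro ⟨z, hz⟩
    rw [exLast, Realize]
    apply FirstOrder.Language.BoundedFormula.realize_ex.mpr
    refine ⟨z, ?_⟩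
    rw [FirstOrder.Language.BoundedFormula.realize_relabel,
      hval z _ (funext fun i => hsnoc z i)]
    exact realize_zero_congr (show FirstOrder.Language.BoundedFormula.Realize f.toFormula
      (Sum.elim (Fin.snoc v z) f.params) default from hz)

lemma paramsIn_exLast {f : ParamFormula L M (n + 1)} {S : Set M} (hf : f.paramsIn S) :
    (exLast f).paramsIn S := hf

/-- Conjunction of a list of parametrized formulas. -/
def listConj (l : List (ParamFormula L M n)) : ParamFormula L M n := l.foldr pand pTop

lemma realize_listConj {l : List (ParamFormula L M n)} {v : Fin n → M} :
    (listConj l).Realize v ↔ ∀ f ∈ l, f.Realize v := by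
  induction l with
  | nil => simp [listConj]
  | cons f t ih =>
    rw [listConj, List.foldr_cons]
    rw [show (List.foldr pand pTop t) = listConj t from rfl]
    rw [realize_pand, ih]
    simp [List.mem_cons, forall_and, or_imp]

lemma paramsIn_listConj {l : List (ParamFormula L M n)} {S : Set M}
    (h : ∀ f ∈ l, f.paramsIn S) : (listConj l).paramsIn S := by
  induction l with
  | nil => exact paramsIn_pTop
  | cons f t ih =>
    rw [listConj, List.foldr_cons, show (List.foldr pand pTop t) = listConj t from rfl]
    exact paramsIn_pand (h f (by simp)) (ih fun g hg => h g (by simp [hg]))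

/-- `∃ z (f(v, z) ∧ g(z))`. -/
def exWith (f : ParamFormula L M (n + 1)) (g : ParamFormula L M 1) : ParamFormula L M n :=
  exLast (f.pand (reindex (fun _ : Fin 1 => Fin.last n) g))

lemma realize_exWith {f : ParamFormula L M (n + 1)} {g : ParamFormula L M 1} {v : Fin n → M} :
    (exWith f g).Realize v ↔
      ∃ z : M, f.Realize (Fin.snoc v z) ∧ g.Realize (fun _ => z) := by
  rw [exWith, realize_exLast]
  refine exists_congr fun z => ?_
  rw [realize_pand, realize_reindex]
  have h : ((Fin.snoc v z : Fin (n + 1) → M) ∘ fun _ : Fin 1 => Fin.last n) = fun _ => z := by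
    funext i; simp [Fin.snoc_last]
  rw [h]

lemma paramsIn_exWith {f : ParamFormula L M (n + 1)} {g : ParamFormula L M 1} {S : Set M}
    (hf : f.paramsIn S) (hg : g.paramsIn S) : (exWith f g).paramsIn S :=
  paramsIn_exLast (paramsIn_pand hf (paramsIn_reindex hg))

lemma realize_exWith_graph {F : (Fin n → M) → M} {f : ParamFormula L M (n + 1)}
    (hf : ∀ (v : Fin n → M) (z : M), f.Realize (Fin.snoc v z) ↔ F v = z)
    (g : ParamFormula L M 1) (v : Fin n → M) :
    (exWith f g).Realize v ↔ g.Realize (fun _ => F v) := by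
  rw [realize_exWith]
  constructor
  · rintro ⟨z, hz, hg⟩
    rwa [← (hf v z).1 hz] at hg
  · intro hg
    exact ⟨F v, (hf v (F v)).2 rfl, hg⟩

/-- Specialize the first variable of a 2-variable formula to a parameter. -/
def fixFst (a : M) (f : ParamFormula L M 2) : ParamFormula L M 1 :=
  ⟨f.m + 1,
    f.toFormula.relabel
      (Sum.elim
        (![Sum.inr (Fin.last f.m), Sum.inl 0] : Fin 2 → Fin 1 ⊕ Fin (f.m + 1))
        (fun j => Sum.inr j.castSucc)),
    Fin.snoc f.params a⟩

lemma realize_fixFst {a : M} {f : ParamFormula L M 2} {v : Fin 1 → M} :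
    (fixFst a f).Realize v ↔ f.Realize ![a, v 0] := by
  have h : (Sum.elim v (Fin.snoc f.params a : Fin (f.m + 1) → M) ∘
      (Sum.elim
        (![Sum.inr (Fin.last f.m), Sum.inl 0] : Fin 2 → Fin 1 ⊕ Fin (f.m + 1))
        (fun j => Sum.inr j.castSucc)))
      = Sum.elim ![a, v 0] f.params := by
    funext s
    cases s with
    | inl i => fin_cases i <;> simp
    | inr j => simp
  simp only [fixFst, Realize, FirstOrder.Language.Formula.realize_relabel, h]

lemma paramsIn_fixFst {a : M} {f : ParamFormula L M 2} {S : Set M} (hf : f.paramsIn S)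
    (ha : a ∈ S) : (fixFst a f).paramsIn S := by
  intro i
  induction i using Fin.lastCases with
  | last => simpa [fixFst] using ha
  | cast i => simpa [fixFst] using hf i

lemma snoc_two (v : Fin 2 → M) (z : M) : (Fin.snoc v z : Fin 3 → M) = ![v 0, v 1, z] := by
  funext i
  fin_cases i <;> (simp [Fin.snoc]; try rfl)

lemma snoc_one (v : Fin 1 → M) (z : M) : (Fin.snoc v z : Fin 2 → M) = ![v 0, z] := by
  funext i
  fin_cases i <;> (simp [Fin.snoc]; try rfl)


end ParamFormula

end Combinators

section Closure

variable {L : FirstOrder.Language.{u, u}} {M : Type u} [L.Structure M]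
variable {κbar : Cardinal.{u}} {D : DefGroup L M} {B : Set M}
variable {q : Set (ParamFormula L M 1)}

open ParamFormula

lemma card_union_lt {S T : Set M} (hκ : ℵ₀ < κbar) (hS : #S < κbar) (hT : #T < κbar) :
    #(↥(S ∪ T)) < κbar :=
  (mk_union_le S T).trans_lt (add_lt_of_lt hκ.le hS hT)

lemma card_insert_lt {S : Set M} (hκ : ℵ₀ < κbar) (hS : #S < κbar) (a : M) :
    #(↥(insert a S)) < κbar :=
  mk_insert_le.trans_lt (add_lt_of_lt hκ.le hS (one_lt_aleph0.trans hκ))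

lemma invClosure (hκ : ℵ₀ < κbar) (hκsat : Saturated L M κbar)
    (hAκ : #(D.AStar) < κbar) (hB : #B < κbar) (hq : q ∈ RB D κbar B)
    (ψ : ParamFormula L M 1) (hψB : ψ.paramsIn B)
    (hψ : ∀ c ∈ Gq D q, ψ.Realize (fun _ => c)) :
    ∃ l' : List (ParamFormula L M 1), (∀ f ∈ l', f ∈ q) ∧
      ∀ x ∈ realizeSet D.pStar, (∀ f ∈ l', f.Realize fun _ => x) →
        ψ.Realize (fun _ => D.inv x) := by
  by_contra hcon
  push_neg at hcon
  obtain ⟨φinv, hφinvA, hφinv⟩ := D.inv_definable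
  have hgraph : ∀ (v : Fin 1 → M) (z : M), φinv.Realize (Fin.snoc v z) ↔ D.inv (v 0) = z := by
    intro v z; rw [snoc_one]; exact hφinv (v 0) z
  set bad := exWith φinv ψ.pnot with hbaddef
  have hbad : ∀ x : M, bad.Realize (fun _ => x) ↔ ¬ ψ.Realize (fun _ => D.inv x) := by
    intro x
    rw [hbaddef, realize_exWith_graph hgraph]
    exact realize_pnot
  have hPover : IsTypeOver ((D.pStar ∪ q) ∪ {bad}) (D.AStar ∪ B) := by
    intro f hf
    rcases hf with (hf | hf) | hf
    · exact fun i => Or.inl (D.pStar_over f hf i)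
    · exact fun i => Or.inr (hq.1 f hf i)
    · simp only [Set.mem_singleton_iff] at hf; subst hf
      exact paramsIn_exWith (fun i => Or.inl (hφinvA i))
        (paramsIn_pnot fun i => Or.inr (hψB i))
  have hfin : ∀ s ⊆ (D.pStar ∪ q) ∪ {bad}, s.Finite →
      ∃ a : M, ∀ f ∈ s, f.Realize fun _ => a := by
    intro s hs hsfin
    have hsq := hsfin.inter_of_left q
    obtain ⟨x, hxp, hxl, hxbad⟩ := hcon hsq.toFinset.toList
      (fun f hf => by
        rw [Finset.mem_toList, Set.Finite.mem_toFinset] at hf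
        exact hf.2)
    refine ⟨x, fun f hf => ?_⟩
    rcases hs hf with (hf' | hf') | hf'
    · exact hxp f hf'
    · exact hxl f (by rw [Finset.mem_toList, Set.Finite.mem_toFinset]; exact ⟨hf, hf'⟩)
    · simp only [Set.mem_singleton_iff] at hf'; subst hf'
      exact (hbad x).2 hxbad
  obtain ⟨a, ha⟩ := hκsat (D.AStar ∪ B) (card_union_lt hκ hAκ hB) _ hPover hfin
  have haGq : a ∈ Gq D q := fun f hf => ha f (Or.inl hf)
  exact (hbad a).1 (ha bad (Or.inr rfl)) (hψ _ (hq.2.1.2.2.2 a haGq))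

lemma mulClosure (hκ : ℵ₀ < κbar) (hκsat : Saturated L M κbar)
    (hAκ : #(D.AStar) < κbar) (hB : #B < κbar) (hq : q ∈ RB D κbar B)
    (ψ : ParamFormula L M 1) (hψB : ψ.paramsIn B)
    (hψ : ∀ c ∈ Gq D q, ψ.Realize (fun _ => c)) :
    ∃ l' : List (ParamFormula L M 1), (∀ f ∈ l', f ∈ q) ∧
      ∀ x ∈ realizeSet D.pStar, ∀ y ∈ realizeSet D.pStar,
        (∀ f ∈ l', f.Realize fun _ => x) → (∀ f ∈ l', f.Realize fun _ => y) →
        ψ.Realize (fun _ => D.mul x y) := by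
  classical
  by_contra hcon
  push_neg at hcon
  obtain ⟨φmul, hφmulA, hφmul⟩ := D.mul_definable
  have hgraph : ∀ (v : Fin 2 → M) (z : M),
      φmul.Realize (Fin.snoc v z) ↔ D.mul (v 0) (v 1) = z := by
    intro v z; rw [snoc_two]; exact hφmul (v 0) (v 1) z
  set bad := exWith φmul ψ.pnot with hbaddef
  have hbad : ∀ v : Fin 2 → M, bad.Realize v ↔ ¬ ψ.Realize (fun _ => D.mul (v 0) (v 1)) := by
    intro v
    rw [hbaddef, realize_exWith_graph hgraph]
    exact realize_pnot
  have hbadparams : bad.paramsIn (D.AStar ∪ B) :=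
    paramsIn_exWith (fun i => Or.inl (hφmulA i)) (paramsIn_pnot fun i => Or.inr (hψB i))
  set E : List (ParamFormula L M 1) → ParamFormula L M 1 := fun l'' =>
    exLast ((reindex (fun _ : Fin 1 => (1 : Fin 2)) (listConj l'')).pand bad) with hEdef
  have hE : ∀ (l'' : List (ParamFormula L M 1)) (x : M), (E l'').Realize (fun _ => x) ↔
      ∃ z : M, (∀ f ∈ l'', f.Realize fun _ => z) ∧
        ¬ ψ.Realize (fun _ => D.mul x z) := by
    intro l'' x
    simp only [hEdef]
    rw [realize_exLast]
    refine exists_congr fun z => ?_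
    rw [realize_pand, realize_reindex, realize_listConj]
    have h1 : ((Fin.snoc (fun _ => x) z : Fin 2 → M) ∘ fun _ : Fin 1 => (1 : Fin 2))
        = fun _ : Fin 1 => z := by
      funext i
      simp only [Function.comp_apply, snoc_one]
      simp
    rw [h1, hbad]
    have h2 : ((Fin.snoc (fun _ => x) z : Fin 2 → M) 0) = x := by
      simp only [snoc_one]; simp
    have h3 : ((Fin.snoc (fun _ => x) z : Fin 2 → M) 1) = z := by
      simp only [snoc_one]; simp
    rw [h2, h3]
  have hEparams : ∀ l'', (∀ f ∈ l'', f ∈ D.pStar ∪ q) →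
      (E l'').paramsIn (D.AStar ∪ B) := by
    intro l'' h
    exact paramsIn_exLast (paramsIn_pand (paramsIn_reindex (paramsIn_listConj (fun f hf =>
      (h f hf).elim (fun h' i => Or.inl (D.pStar_over f h' i))
        (fun h' i => Or.inr (hq.1 f h' i))))) hbadparams)
  have hP1over : IsTypeOver
      ((D.pStar ∪ q) ∪ (E '' {l'' | ∀ f ∈ l'', f ∈ D.pStar ∪ q})) (D.AStar ∪ B) := by
    intro f hf
    rcases hf with (hf | hf) | hf
    · exact fun i => Or.inl (D.pStar_over f hf i)
    · exact fun i => Or.inr (hq.1 f hf i)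
    · obtain ⟨l'', hl'', rfl⟩ := hf
      exact hEparams l'' hl''
  have hfin1 : ∀ s ⊆ (D.pStar ∪ q) ∪ (E '' {l'' | ∀ f ∈ l'', f ∈ D.pStar ∪ q}), s.Finite →
      ∃ a : M, ∀ f ∈ s, f.Realize fun _ => a := by
    intro s hs hsfin
    obtain ⟨c, hc⟩ : ∃ c : ParamFormula L M 1 → List (ParamFormula L M 1),
        ∀ g, g ∈ E '' {l'' | ∀ f ∈ l'', f ∈ D.pStar ∪ q} →
          (∀ f ∈ c g, f ∈ D.pStar ∪ q) ∧ E (c g) = g := by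
      refine ⟨fun g => if h : g ∈ E '' {l'' | ∀ f ∈ l'', f ∈ D.pStar ∪ q}
        then h.choose else [], fun g hg => ?_⟩
      simp only [dif_pos hg]
      exact ⟨hg.choose_spec.1, hg.choose_spec.2⟩
    have hbigfin : (s ∪ {f | f ∈ (hsfin.toFinset.toList.map c).flatten}).Finite :=
      hsfin.union ((hsfin.toFinset.toList.map c).flatten.finite_toSet)
    have hlq := hbigfin.inter_of_left q
    obtain ⟨x, hxp, y, hyp, hx', hy', hbadxy⟩ := hcon hlq.toFinset.toList
      (fun f hf => by rw [Finset.mem_toList, Set.Finite.mem_toFinset] at hf; exact hf.2)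
    refine ⟨x, fun f hf => ?_⟩
    rcases hs hf with (hf' | hf') | hf'
    · exact hxp f hf'
    · exact hx' f (by rw [Finset.mem_toList, Set.Finite.mem_toFinset]; exact ⟨Or.inl hf, hf'⟩)
    · obtain ⟨hcf, hEf⟩ := hc f hf'
      rw [← hEf, hE]
      refine ⟨y, fun g hg => ?_, hbadxy⟩
      rcases hcf g hg with hg' | hg'
      · exact hyp g hg'
      · have hgLL : g ∈ (hsfin.toFinset.toList.map c).flatten := by
          apply List.mem_flatten.mpr
          refine ⟨c f, List.mem_map.mpr ⟨f, ?_, rfl⟩, hg⟩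
          rw [Finset.mem_toList, Set.Finite.mem_toFinset]; exact hf
        exact hy' g (by
          rw [Finset.mem_toList, Set.Finite.mem_toFinset]; exact ⟨Or.inr hgLL, hg'⟩)
  obtain ⟨a, ha⟩ := hκsat (D.AStar ∪ B) (card_union_lt hκ hAκ hB) _ hP1over hfin1
  have haGq : a ∈ Gq D q := fun f hf => ha f (Or.inl hf)
  have haE : ∀ l'' : List (ParamFormula L M 1), (∀ f ∈ l'', f ∈ D.pStar ∪ q) →
      ∃ z, (∀ f ∈ l'', f.Realize fun _ => z) ∧
        ¬ ψ.Realize (fun _ => D.mul a z) := by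
    intro l'' hl''
    exact (hE l'' a).1 (ha (E l'') (Or.inr ⟨l'', hl'', rfl⟩))
  have hbadA : ∀ z : M, (fixFst a bad).Realize (fun _ => z) ↔
      ¬ ψ.Realize (fun _ => D.mul a z) := by
    intro z
    rw [realize_fixFst, hbad]
    simp
  have hP2over : IsTypeOver ((D.pStar ∪ q) ∪ {fixFst a bad})
      (insert a (D.AStar ∪ B)) := by
    intro f hf
    rcases hf with (hf | hf) | hf
    · exact fun i => Or.inr (Or.inl (D.pStar_over f hf i))
    · exact fun i => Or.inr (Or.inr (hq.1 f hf i))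
    · simp only [Set.mem_singleton_iff] at hf; subst hf
      exact paramsIn_fixFst (fun i => Or.inr (hbadparams i)) (Or.inl rfl)
  have hfin2 : ∀ s ⊆ (D.pStar ∪ q) ∪ {fixFst a bad}, s.Finite →
      ∃ b : M, ∀ f ∈ s, f.Realize fun _ => b := by
    intro s hs hsfin
    have hspq := hsfin.inter_of_left (D.pStar ∪ q)
    obtain ⟨z, hz1, hz2⟩ := haE hspq.toFinset.toList (fun f hf => by
      rw [Finset.mem_toList, Set.Finite.mem_toFinset] at hf; exact hf.2)
    refine ⟨z, fun f hf => ?_⟩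
    rcases hs hf with hf' | hf'
    · exact hz1 f (by rw [Finset.mem_toList, Set.Finite.mem_toFinset]; exact ⟨hf, hf'⟩)
    · simp only [Set.mem_singleton_iff] at hf'; subst hf'
      exact (hbadA z).2 hz2
  obtain ⟨b, hb⟩ := hκsat _ (card_insert_lt hκ (card_union_lt hκ hAκ hB) a) _ hP2over hfin2
  have hbGq : b ∈ Gq D q := fun f hf => hb f (Or.inl hf)
  exact (hbadA b).1 (hb _ (Or.inr rfl)) (hψ _ (hq.2.1.2.2.1 a haGq b hbGq))

lemma closureStep (hκ : ℵ₀ < κbar) (hκsat : Saturated L M κbar)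
    (hAκ : #(D.AStar) < κbar) (hB : #B < κbar) (hq : q ∈ RB D κbar B)
    (l : List (ParamFormula L M 1)) (hl : ∀ f ∈ l, f ∈ q) :
    ∃ l' : List (ParamFormula L M 1), (∀ f ∈ l', f ∈ q) ∧
      ∀ x ∈ realizeSet D.pStar, ∀ y ∈ realizeSet D.pStar,
        (∀ f ∈ l', f.Realize fun _ => x) → (∀ f ∈ l', f.Realize fun _ => y) →
        (∀ f ∈ l, f.Realize fun _ => D.mul x y) ∧
          (∀ f ∈ l, f.Realize fun _ => D.inv x) ∧
          (∀ f ∈ l, f.Realize fun _ => D.mul x (D.inv y)) := by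
  have hconj : ∀ l0 : List (ParamFormula L M 1), (∀ f ∈ l0, f ∈ q) →
      (listConj l0).paramsIn B ∧ ∀ c ∈ Gq D q, (listConj l0).Realize (fun _ => c) := by
    intro l0 h
    refine ⟨paramsIn_listConj fun f hf => hq.1 f (h f hf), fun c hc => ?_⟩
    rw [realize_listConj]
    exact fun f hf => hc f (Or.inr (h f hf))
  obtain ⟨l1, hl1q, hl1⟩ :=
    mulClosure hκ hκsat hAκ hB hq (listConj l) (hconj l hl).1 (hconj l hl).2
  obtain ⟨l2, hl2q, hl2⟩ :=
    invClosure hκ hκsat hAκ hB hq (listConj l) (hconj l hl).1 (hconj l hl).2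
  obtain ⟨l3, hl3q, hl3⟩ :=
    invClosure hκ hκsat hAκ hB hq (listConj l1) (hconj l1 hl1q).1 (hconj l1 hl1q).2
  refine ⟨l1 ++ l2 ++ l3, ?_, ?_⟩
  · intro f hf
    rcases List.mem_append.mp hf with hf | hf
    · rcases List.mem_append.mp hf with hf | hf
      · exact hl1q f hf
      · exact hl2q f hf
    · exact hl3q f hf
  · intro x hx y hy hx' hy'
    have hx1 : ∀ f ∈ l1, f.Realize fun _ => x := fun f hf => hx' f (by simp [hf])
    have hy1 : ∀ f ∈ l1, f.Realize fun _ => y := fun f hf => hy' f (by simp [hf])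
    have hx2 : ∀ f ∈ l2, f.Realize fun _ => x := fun f hf => hx' f (by simp [hf])
    have hy3 : ∀ f ∈ l3, f.Realize fun _ => y := fun f hf => hy' f (by simp [hf])
    refine ⟨realize_listConj.mp (hl1 x hx y hy hx1 hy1), realize_listConj.mp (hl2 x hx hx2), ?_⟩
    have hinvy : ∀ f ∈ l1, f.Realize fun _ => D.inv y :=
      realize_listConj.mp (hl3 y hy hy3)
    exact realize_listConj.mp (hl1 x hx (D.inv y) (D.inv_mem' y hy) hx1 hinvy)

end Closure

/-- Observation 2.3(4) of [Sh:886]: if `q ∈ R_B` and `q' ⊆ q` is countable, then there are a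
countable sequence `ā` from `B` and finite conjunctions `ψ_n(x, ā)` of members of `q` such
that `p*(x) ∪ {ψ_n(x, ā) : n < ω} ⊢ q'(x)`, each `ψ_{n+1}` implies `ψ_n`, and
`p*(x) ∪ p*(y) ∪ {ψ_{n+1}(x, ā), ψ_{n+1}(y, ā)} ⊢ ψ_n(x·y, ā) ∧ ψ_n(x⁻¹, ā) ∧ ψ_n(x·y⁻¹, ā)`. -/
theorem observation_dt18_4
    {L : FirstOrder.Language.{u, u}} {M : Type u} [L.Structure M]
    (κbar : Cardinal.{u}) (hκinacc : κbar.IsInaccessible) (hκT : theoryCard L < κbar)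
    (hκsat : Saturated L M κbar)
    (D : DefGroup L M) (hAκ : #(D.AStar) < κbar)
    (B : Set M) (hB : #B < κbar)
    (q : Set (ParamFormula L M 1)) (hq : q ∈ RB D κbar B)
    (q' : Set (ParamFormula L M 1)) (hq' : q' ⊆ q) (hq'c : q'.Countable) :
    ∃ (γ : Type u) (_ : Countable γ) (a : γ → M), Set.range a ⊆ B ∧
      ∃ ψ : ℕ → ParamFormula L M 1,
        (∀ n, (ψ n).paramsIn (Set.range a)) ∧
        (∀ n, ∃ l : List (ParamFormula L M 1), (∀ f ∈ l, f ∈ q) ∧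
          ∀ x : M, ((ψ n).Realize (fun _ => x) ↔ ∀ f ∈ l, f.Realize fun _ => x)) ∧
        (∀ x : M, x ∈ realizeSet D.pStar → (∀ n, (ψ n).Realize fun _ => x) →
          x ∈ realizeSet q') ∧
        (∀ (n : ℕ) (x : M), (ψ (n + 1)).Realize (fun _ => x) → (ψ n).Realize fun _ => x) ∧
        (∀ (n : ℕ) (x y : M), x ∈ realizeSet D.pStar → y ∈ realizeSet D.pStar →
          (ψ (n + 1)).Realize (fun _ => x) → (ψ (n + 1)).Realize (fun _ => y) →
          ((ψ n).Realize fun _ => D.mul x y) ∧ ((ψ n).Realize fun _ => D.inv x) ∧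
            ((ψ n).Realize fun _ => D.mul x (D.inv y))) := by
  classical
  have hκ : ℵ₀ < κbar := hκinacc.1
  obtain ⟨e, he, hcov⟩ : ∃ e : ℕ → Option (ParamFormula L M 1),
      (∀ (n : ℕ) (f : ParamFormula L M 1), e n = some f → f ∈ q) ∧
      ∀ f ∈ q', ∃ n : ℕ, e n = some f := by
    rcases Set.eq_empty_or_nonempty q' with h | h
    · exact ⟨fun _ => none, fun n f hf => by simp at hf, fun f hf => by simp [h] at hf⟩
    · obtain ⟨g, hg⟩ := hq'c.exists_eq_range h
      refine ⟨fun n => some (g n), fun n f hf => ?_, fun f hf => ?_⟩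
      · exact hq' (by rw [hg]; exact ⟨n, Option.some.inj hf⟩)
      · rw [hg] at hf
        obtain ⟨n, hn⟩ := hf
        exact ⟨n, congrArg some hn⟩
  let T := {l : List (ParamFormula L M 1) // ∀ f ∈ l, f ∈ q}
  let E0 : T := ⟨(e 0).toList, fun f hf =>
    he 0 f (Option.mem_def.mp (Option.mem_toList.mp hf))⟩
  let next : ℕ → T → T := fun n lh =>
    ⟨(closureStep hκ hκsat hAκ hB hq lh.1 lh.2).choose ++ lh.1 ++ (e n).toList, by
      intro f hf
      rcases List.mem_append.mp hf with hf | hf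
      · rcases List.mem_append.mp hf with hf | hf
        · exact (closureStep hκ hκsat hAκ hB hq lh.1 lh.2).choose_spec.1 f hf
        · exact lh.2 f hf
      · exact he n f (Option.mem_def.mp (Option.mem_toList.mp hf))⟩
  let LT : ℕ → T := fun n => Nat.rec E0 (fun n ih => next (n + 1) ih) n
  let LL : ℕ → List (ParamFormula L M 1) := fun n => (LT n).1
  have hLLq : ∀ n, ∀ f ∈ LL n, f ∈ q := fun n => (LT n).2
  let ψ : ℕ → ParamFormula L M 1 := fun n => ParamFormula.listConj (LL n)
  have hLLmono : ∀ n, ∀ f ∈ LL n, f ∈ LL (n + 1) := by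
    intro n f hf
    show f ∈ (closureStep hκ hκsat hAκ hB hq (LT n).1 (LT n).2).choose ++
      (LT n).1 ++ (e (n + 1)).toList
    exact List.mem_append.mpr (Or.inl (List.mem_append.mpr (Or.inr hf)))
  have hLLchoose : ∀ n, ∀ f ∈ (closureStep hκ hκsat hAκ hB hq (LT n).1 (LT n).2).choose,
      f ∈ LL (n + 1) := by
    intro n f hf
    show f ∈ (closureStep hκ hκsat hAκ hB hq (LT n).1 (LT n).2).choose ++
      (LT n).1 ++ (e (n + 1)).toList
    exact List.mem_append.mpr (Or.inl (List.mem_append.mpr (Or.inl hf)))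
  have hLLe : ∀ n f, e n = some f → f ∈ LL n := by
    intro n f hn
    cases n with
    | zero =>
      show f ∈ (e 0).toList
      exact Option.mem_toList.mpr (Option.mem_def.mpr hn)
    | succ n =>
      show f ∈ (closureStep hκ hκsat hAκ hB hq (LT n).1 (LT n).2).choose ++
        (LT n).1 ++ (e (n + 1)).toList
      exact List.mem_append.mpr (Or.inr (Option.mem_toList.mpr (Option.mem_def.mpr hn)))
  refine ⟨ULift.{u} (Σ n : ℕ, Fin (ψ n).m), inferInstance,
    fun p => (ψ p.down.1).params p.down.2, ?_, ψ, ?_, ?_, ?_, ?_, ?_⟩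
  · rintro x ⟨⟨⟨n, i⟩⟩, rfl⟩
    exact ParamFormula.paramsIn_listConj (fun f hf => hq.1 f (hLLq n f hf)) i
  · intro n i
    exact ⟨ULift.up ⟨n, i⟩, rfl⟩
  · intro n
    exact ⟨LL n, hLLq n, fun x => ParamFormula.realize_listConj⟩
  · intro x hx hall f hf
    obtain ⟨n, hn⟩ := hcov f hf
    exact ParamFormula.realize_listConj.mp (hall n) f (hLLe n f hn)
  · intro n x h
    have h' := ParamFormula.realize_listConj.mp h
    exact ParamFormula.realize_listConj.mpr fun f hf => h' f (hLLmono n f hf)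
  · intro n x y hx hy hx1 hy1
    have hx' := ParamFormula.realize_listConj.mp hx1
    have hy' := ParamFormula.realize_listConj.mp hy1
    obtain ⟨hmul, hinv, hmulinv⟩ :=
      (closureStep hκ hκsat hAκ hB hq (LT n).1 (LT n).2).choose_spec.2 x hx y hy
        (fun f hf => hx' f (hLLchoose n f hf)) (fun f hf => hy' f (hLLchoose n f hf))
    exact ⟨ParamFormula.realize_listConj.mpr hmul, ParamFormula.realize_listConj.mpr hinv,
      ParamFormula.realize_listConj.mpr hmulinv⟩


end Paper886
end

section
/- T is k-dependent provided that: for every m, ℓ < ω and every formula φ(x̄_m, ȳ) ∈ L(τ_T), for infinitely many n < ω it holds that every set A ⊆ 𝔠 with |A| ≤ n satisfies |S^m_{{φ(x̄_m,ȳ)}}(A)| < 2^{(n/ℓ)^k}. -/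
/-!
If `φ(x̄, ȳ_0, …, ȳ_{k-1})` is `k`-independent, an independent array indexed by `r × ⋯ × r`
realizes all `2^{r^k}` patterns, and distinct patterns are distinct `φ`-types over the
`r · Σ lg(ȳ_ℓ)` parameters of the array. Taking `ℓ = Σ lg(ȳ_ℓ) + 1` and `r = n / ℓ` for one of the
`n` of the hypothesis contradicts the bound `2^{(n/ℓ)^k}`.
-/

open FirstOrder Cardinal Set

universe u

namespace Paper886

variable {L : FirstOrder.Language.{u, u}} {M : Type u} [L.Structure M]

/-- The complete `φ`-types over `A`, each encoded by the set of parameter tuples from `A`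
at which `φ(x̄, -)` holds. -/
def phiTypes {m np : ℕ} (φ : L.Formula (Fin m ⊕ Fin np)) (A : Set M) : Set (Set (Fin np → M)) :=
  {S | ∃ x : Fin m → M, S = {b | (∀ i, b i ∈ A) ∧ φ.Realize (Sum.elim x b)}}

theorem two_pow_le_card_phiTypes {m np : ℕ} {φ : L.Formula (Fin m ⊕ Fin np)} {A : Set M}
    {β : Type u} (b : β → Fin np → M) (hbA : ∀ η i, b η i ∈ A)
    (hshatter : ∀ u : Set β, ∃ x : Fin m → M, ∀ η, φ.Realize (Sum.elim x (b η)) ↔ η ∈ u) :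
    2 ^ #β ≤ #(phiTypes φ A) := by
  choose x hx using hshatter
  have hmem : ∀ u η, b η ∈ {b | (∀ i, b i ∈ A) ∧ φ.Realize (Sum.elim (x u) b)} ↔ η ∈ u :=
    fun u η => ⟨fun h => (hx u η).1 h.2, fun h => ⟨hbA η, (hx u η).2 h⟩⟩
  rw [← mk_set]
  refine mk_le_of_injective (f := fun u => (⟨_, x u, rfl⟩ : phiTypes φ A)) fun u v huv => ?_
  ext η
  rw [← hmem u η, ← hmem v η]
  exact Iff.of_eq (congrArg (b η ∈ Subtype.val ·) huv)

theorem realize_relabel_sumMap_equiv {γ α β : Type*} (φ : L.Formula (γ ⊕ α)) (e : α ≃ β)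
    (x : γ → M) (v : α → M) :
    (φ.relabel (Sum.map id e)).Realize (Sum.elim x (v ∘ e.symm)) ↔ φ.Realize (Sum.elim x v) := by
  rw [Language.Formula.realize_relabel, Sum.elim_comp_map, Function.comp_assoc,
    e.symm_comp_self, Function.comp_id, Function.comp_id]

theorem FormulaKIndep.exists_finset_two_pow_le_card_phiTypes {κ : Cardinal.{u}} {k nx : ℕ}
    {ny : Fin k → ℕ} {φ : L.Formula (Fin nx ⊕ ((ℓ : Fin k) × Fin (ny ℓ)))}
    (hφ : FormulaKIndep M κ k nx ny φ) {r : ℕ} (hr : (r : Cardinal) < κ) :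
    ∃ A : Finset M, A.card ≤ r * ∑ ℓ, ny ℓ ∧
      2 ^ ((r ^ k : ℕ) : Cardinal) ≤
        #(phiTypes (φ.relabel (Sum.map id (Fintype.equivFin _))) (A : Set M)) := by
  classical
  obtain ⟨a, hpattern⟩ := hφ (ULift (Fin r)) (by simpa using hr)
  set e := Fintype.equivFin ((ℓ : Fin k) × Fin (ny ℓ))
  refine ⟨Finset.univ.image fun p : (ℓ : Fin k) × (ULift (Fin r) × Fin (ny ℓ)) =>
      a p.1 p.2.1 p.2.2, ?_, ?_⟩
  · refine Finset.card_image_le.trans ?_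
    simp [Fintype.card_sigma, Finset.mul_sum]
  · have hcard : #(Fin k → ULift.{u} (Fin r)) = ((r ^ k : ℕ) : Cardinal) := by simp
    rw [← hcard]
    refine two_pow_le_card_phiTypes (fun η => (fun p => a p.1 (η p.1) p.2) ∘ e.symm)
      (fun η i => Finset.mem_coe.2 <|
        Finset.mem_image.2 ⟨⟨(e.symm i).1, η _, (e.symm i).2⟩, Finset.mem_univ _, rfl⟩) fun u => ?_
    obtain ⟨x, hx⟩ := hpattern u Finset.univ
    exact ⟨x, fun η => (realize_relabel_sumMap_equiv φ e x _).trans (hx η (Finset.mem_univ η))⟩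

theorem observation_nd17_1_general
    {L : FirstOrder.Language.{u, u}} {M : Type u} [L.Structure M]
    (κbar : Cardinal.{u}) (hκinacc : κbar.IsInaccessible)
    (k : ℕ)
    (hcount : ∀ (m np ℓ : ℕ), 0 < ℓ → ∀ φ : L.Formula (Fin m ⊕ Fin np),
      {n : ℕ | ∀ A : Finset M, A.card ≤ n →
        #{S : Set (Fin np → M) | ∃ x : Fin m → M,
            S = {b | (∀ i, b i ∈ A) ∧ φ.Realize (Sum.elim x b)}} <
          (2 : Cardinal.{u}) ^ (((n / ℓ) ^ k : ℕ) : Cardinal.{u})}.Infinite) :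
    KDependent L M κbar k := by
  rintro ⟨nx, ny, φ, hφ⟩
  set ℓ := ∑ i, ny i + 1
  obtain ⟨n, hn⟩ := (hcount nx _ ℓ (Nat.succ_pos _) _).nonempty
  obtain ⟨A, hAcard, htypes⟩ := hφ.exists_finset_two_pow_le_card_phiTypes (hκinacc.nat_lt (n / ℓ))
  refine (hn A (hAcard.trans ?_)).not_ge htypes
  calc n / ℓ * ∑ i, ny i ≤ n / ℓ * ℓ := Nat.mul_le_mul_left _ (Nat.le_succ _)
    _ ≤ n := Nat.div_mul_le_self n ℓ

/-- Observation 2.7(1) of [Sh:886]: `T` is `k`-dependent provided that for every `m`, `ℓ ≥ 1`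
and formula `φ(x̄_m, ȳ)`, for infinitely many `n` every parameter set `A` with `|A| ≤ n`
admits fewer than `2^{(n/ℓ)^k}` complete `φ`-types over `A` in the variables `x̄_m`. -/
theorem observation_nd17_1
    {L : FirstOrder.Language.{u, u}} {M : Type u} [L.Structure M]
    (κbar : Cardinal.{u}) (hκinacc : κbar.IsInaccessible) (hκT : theoryCard L < κbar)
    (hκsat : Saturated L M κbar)
    (k : ℕ)
    (hcount : ∀ (m np ℓ : ℕ), 0 < ℓ → ∀ φ : L.Formula (Fin m ⊕ Fin np),
      {n : ℕ | ∀ A : Finset M, A.card ≤ n →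
        #{S : Set (Fin np → M) | ∃ x : Fin m → M,
            S = {b | (∀ i, b i ∈ A) ∧ φ.Realize (Sum.elim x b)}} <
          (2 : Cardinal.{u}) ^ (((n / ℓ) ^ k : ℕ) : Cardinal.{u})}.Infinite) :
    KDependent L M κbar k :=
  observation_nd17_1_general κbar hκinacc k hcount

end Paper886
end

section
/- In the definition of a k-independent formula one may restrict to increasing index functions: a formula φ(x̄, ȳ_0, …, ȳ_{k-1}) is k-independent for T provided that for every n < ω there are tuples ā_{ℓ,m} ∈ ^{lg(ȳ_ℓ)}𝔠 for m < n, ℓ < k, such that ⟨φ(x̄, ā_{0,η(0)}, …, ā_{k-1,η(k-1)}) : η ∈ inc_k(n)⟩ is an independent sequence of formulas, where inc_k(n) is the set of strictly increasing η ∈ ^kn. -/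
open FirstOrder Cardinal Set

universe u

namespace Paper886

variable {L : FirstOrder.Language.{u, u}} {M : Type u} [L.Structure M]

/-!
Spreading the `ℓ`-th coordinate of an index function into the `ℓ`-th of `k` consecutive blocks
of `n` indices makes it strictly increasing, so the hypothesis yields, for every `n`, arrays
indexed by `Fin n` in which the instances for all index functions are independent. Any finite
part of the required `ι`-indexed array involves only finitely many indices, so the formulas in
the array entries saying that all patterns are consistent are finitely satisfiable. There are
fewer than `κ̄` entries, and a `κ̄`-saturated model realizes them all: choose the entries one by
one along a well-order, each time realizing a 1-type over the fewer than `κ̄` entries already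
chosen.
-/

open FirstOrder.Language

section Saturation

variable {L : FirstOrder.Language.{u, u}} {M : Type u} [L.Structure M]

theorem realize_iff_of_eqOn_freeVarFinset {V : Type*} [DecidableEq V] (ψ : L.Formula V)
    {d d' : V → M} (h : EqOn d d' ψ.freeVarFinset) : ψ.Realize d ↔ ψ.Realize d' :=
  (BoundedFormula.realize_restrictFreeVar (f := id) (v := fun w => d w) d fun _ => rfl).symm.trans
    (BoundedFormula.realize_restrictFreeVar d' fun w => h w.2)

namespace ParamFormula

noncomputable def ofFinite {n : ℕ} {β : Type*} [Finite β] (θ : L.Formula (Fin n ⊕ β))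
    (p : β → M) : ParamFormula L M n where
  m := Nat.card β
  toFormula := θ.relabel (Sum.map id (Finite.equivFin β))
  params := p ∘ (Finite.equivFin β).symm

theorem realize_ofFinite {n : ℕ} {β : Type*} [Finite β] (θ : L.Formula (Fin n ⊕ β))
    (p : β → M) (v : Fin n → M) : (ofFinite θ p).Realize v ↔ θ.Realize (Sum.elim v p) := by
  simp only [ParamFormula.Realize, ofFinite, Formula.realize_relabel, Sum.elim_comp_map,
    Function.comp_id, Function.comp_assoc, Equiv.symm_comp_self]

end ParamFormula

/-- Substituting the values of `c` on `P` and quantifying away the variables outside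
`P ∪ {v}` turns `ψ` into a formula over `c '' P` in the single variable `v`. -/
theorem exists_paramFormula_realize_iff {V : Type*} (ψ : L.Formula V) (c : V → M)
    {P : Set V} {v : V} (hv : v ∉ P) :
    ∃ f : ParamFormula L M 1, f.paramsIn (c '' P) ∧ ∀ x : M,
      (f.Realize fun _ => x) ↔ ∃ d : V → M, d v = x ∧ EqOn d c P ∧ ψ.Realize d := by
  classical
  let S := ψ.freeVarFinset
  let Q := {w : S // (w : V) ∈ P}
  let g : S → (Fin 1 ⊕ Q) ⊕ S := fun w =>
    if (w : V) = v then .inl (.inl 0) else if h : (w : V) ∈ P then .inl (.inr ⟨w, h⟩) else .inr w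
  let val (x : M) (i : S → M) : (Fin 1 ⊕ Q) ⊕ S → M :=
    Sum.elim (Sum.elim (fun _ => x) fun q => c q.1) i
  have hval : ∀ x i (d : V → M), d v = x → EqOn d c P →
      (∀ w : S, (w : V) ∉ P → (w : V) ≠ v → i w = d w) → ∀ w, val x i (g w) = d w := by
    intro x i d hdv hdc hdi w
    by_cases hwv : (w : V) = v
    · simp [g, val, hwv, hdv]
    by_cases hwP : (w : V) ∈ P
    · simp [g, val, hwv, hwP, hdc hwP]
    · simp [g, val, hwv, hwP, hdi w hwP hwv]
  refine ⟨.ofFinite (Formula.iExs S (ψ.restrictFreeVar g)) fun q : Q => c q.1,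
    fun i => mem_image_of_mem c ((Finite.equivFin Q).symm i).2, fun x => ?_⟩
  rw [ParamFormula.realize_ofFinite, Formula.realize_iExs]
  constructor
  · rintro ⟨i, hi⟩
    let d : V → M := Function.update (P.piecewise c (Function.extend Subtype.val i c)) v x
    have hdc : EqOn d c P := fun w hw => by
      simp [d, ne_of_mem_of_not_mem hw hv, piecewise_eq_of_mem _ _ _ hw]
    refine ⟨d, Function.update_self _ _ _, hdc, (BoundedFormula.realize_restrictFreeVar d ?_).1 hi⟩
    refine hval x i d (Function.update_self _ _ _) hdc fun w hwP hwv => ?_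
    simp [d, hwv, piecewise_eq_of_notMem _ _ _ hwP]
  · rintro ⟨d, hdv, hdc, hψ⟩
    exact ⟨fun w => d w,
      (BoundedFormula.realize_restrictFreeVar d (hval x _ d hdv hdc fun _ _ _ => rfl)).2 hψ⟩

variable {V : Type u} {J : Type*}

def FinSatExtending (ψ : J → L.Formula V) (c : V → M) (P : Set V) : Prop :=
  ∀ t : Finset J, ∃ d : V → M, (∀ j ∈ t, (ψ j).Realize d) ∧ EqOn d c P

def extensionType (ψ : J → L.Formula V) (c : V → M) (P : Set V) (v : V) :
    Set (ParamFormula L M 1) :=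
  {f | f.paramsIn (c '' P) ∧ ∃ t : Finset J, ∀ x : M, (f.Realize fun _ => x) ↔
    ∃ d : V → M, d v = x ∧ EqOn d c P ∧ ∀ j ∈ t, (ψ j).Realize d}

theorem extensionType_congr (ψ : J → L.Formula V) {c c' : V → M} {P : Set V} (v : V)
    (h : EqOn c c' P) : extensionType ψ c P v = extensionType ψ c' P v := by
  have hd : ∀ d : V → M, EqOn d c P ↔ EqOn d c' P :=
    fun d => ⟨fun hd => hd.trans h, fun hd => hd.trans h.symm⟩
  simp only [extensionType, h.image_eq, hd]

theorem isTypeOver_extensionType (ψ : J → L.Formula V) (c : V → M) (P : Set V) (v : V) :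
    IsTypeOver (extensionType ψ c P v) (c '' P) :=
  fun _ hf => hf.1

namespace FinSatExtending

variable {ψ : J → L.Formula V} {c : V → M} {P : Set V}

theorem exists_realize_extensionType (h : FinSatExtending ψ c P) (v : V)
    (s : Set (ParamFormula L M 1)) (hs : s ⊆ extensionType ψ c P v) (hfin : s.Finite) :
    ∃ a : M, ∀ f ∈ s, f.Realize fun _ => a := by
  classical
  have := hfin.fintype
  choose T hT using fun f : s => (hs f.2).2
  obtain ⟨d, hd, hdc⟩ := h (Finset.univ.biUnion T)
  exact ⟨d v, fun f hf => (hT ⟨f, hf⟩ (d v)).2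
    ⟨d, rfl, hdc, fun j hj => hd j (Finset.mem_biUnion.2 ⟨⟨f, hf⟩, Finset.mem_univ _, hj⟩)⟩⟩

theorem insert_of_mem_realizeSet {v : V} (hv : v ∉ P)
    (hcv : c v ∈ realizeSet (extensionType ψ c P v)) : FinSatExtending ψ c (insert v P) := by
  intro t
  obtain ⟨f, hfP, hf⟩ := exists_paramFormula_realize_iff (Formula.iInf fun j : t => ψ j) c hv
  have hft : f ∈ extensionType ψ c P v :=
    ⟨hfP, t, fun x => (hf x).trans (by simp [Formula.realize_iInf])⟩
  obtain ⟨d, hdv, hdc, hd⟩ := (hf (c v)).1 (hcv f hft)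
  refine ⟨d, fun j hj => Formula.realize_iInf.1 hd ⟨j, hj⟩, ?_⟩
  rintro w (rfl | hw)
  exacts [hdv, hdc hw]

/-- An assignment only matters on the finitely many free variables of a finite subfamily,
and those lying in `P` lie below their maximum. -/
theorem of_forall_Iic [LinearOrder V] (h₀ : FinSatExtending ψ c ∅)
    (h : ∀ w ∈ P, FinSatExtending ψ c (Iic w)) : FinSatExtending ψ c P := by
  classical
  intro t
  let F := (t.biUnion fun j => (ψ j).freeVarFinset).filter (· ∈ P)
  obtain ⟨d, hd, hdF⟩ : ∃ d : V → M, (∀ j ∈ t, (ψ j).Realize d) ∧ EqOn d c F := by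
    rcases F.eq_empty_or_nonempty with hF | hF
    · obtain ⟨d, hd, -⟩ := h₀ t
      exact ⟨d, hd, by simp [hF]⟩
    · obtain ⟨d, hd, hdc⟩ := h (F.max' hF) (Finset.mem_filter.1 (F.max'_mem hF)).2 t
      exact ⟨d, hd, fun w hw => hdc (F.le_max' w hw)⟩
  refine ⟨P.piecewise c d, fun j hj => ?_, fun w hw => piecewise_eq_of_mem _ _ _ hw⟩
  refine (realize_iff_of_eqOn_freeVarFinset _ fun w hw => ?_).2 (hd j hj)
  by_cases hwP : w ∈ P
  · rw [piecewise_eq_of_mem _ _ _ hwP]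
    exact (hdF (Finset.mem_filter.2 ⟨Finset.mem_biUnion.2 ⟨j, hj, hw⟩, hwP⟩)).symm
  · exact piecewise_eq_of_notMem _ _ _ hwP

end FinSatExtending

theorem Saturated.exists_realize {κ : Cardinal.{u}} (hsat : Saturated L M κ) (hV : #V < κ)
    (ψ : J → L.Formula V) (hψ : ∀ t : Finset J, ∃ d : V → M, ∀ j ∈ t, (ψ j).Realize d) :
    ∃ c : V → M, ∀ j, (ψ j).Realize c := by
  classical
  obtain ⟨d₀, -⟩ := hψ ∅
  let _ : LinearOrder V := IsWellOrder.linearOrder WellOrderingRel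
  have : WellFoundedLT V := ⟨WellOrderingRel.isWellOrder.wf⟩
  let c : V → M := WellFoundedLT.fix fun v prev =>
    let c' : V → M := fun w => if h : w < v then prev w h else d₀ w
    @Classical.epsilon M ⟨d₀ v⟩ (· ∈ realizeSet (extensionType ψ c' (Iio v) v))
  have hc : ∀ v, (realizeSet (extensionType ψ c (Iio v) v)).Nonempty →
      c v ∈ realizeSet (extensionType ψ c (Iio v) v) := by
    intro v hne
    have hc' : extensionType ψ (fun w => if h : w < v then c w else d₀ w) (Iio v) v =
        extensionType ψ c (Iio v) v := extensionType_congr ψ v fun w hw => dif_pos hw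
    rw [show c v = _ from WellFoundedLT.fix_eq _ v]
    change @Classical.epsilon M ⟨d₀ v⟩ (· ∈ realizeSet (extensionType ψ
      (fun w => if h : w < v then c w else d₀ w) (Iio v) v)) ∈ _
    rw [hc']
    exact Classical.epsilon_spec hne
  have h₀ : FinSatExtending ψ c ∅ := fun t => (hψ t).imp fun d hd => ⟨hd, eqOn_empty _ _⟩
  have hIic : ∀ v, FinSatExtending ψ c (Iic v) := by
    intro v
    induction v using WellFoundedLT.induction with
    | _ v ih =>
      have hIio : FinSatExtending ψ c (Iio v) := .of_forall_Iic h₀ ih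
      have hB : #(c '' Iio v) < κ := mk_image_le.trans_lt ((mk_set_le _).trans_lt hV)
      obtain ⟨a, ha⟩ := hsat _ hB _ (isTypeOver_extensionType ψ c _ v)
        (hIio.exists_realize_extensionType v)
      rw [← Iio_insert]
      exact .insert_of_mem_realizeSet (lt_irrefl v) (hc v ⟨a, ha⟩)
  refine ⟨c, fun j => ?_⟩
  obtain ⟨d, hd, hdc⟩ := FinSatExtending.of_forall_Iic (P := univ) h₀ (fun w _ => hIic w) {j}
  obtain rfl : d = c := funext fun w => hdc (mem_univ w)
  exact hd j (Finset.mem_singleton_self j)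

end Saturation

section Independence

variable {L : FirstOrder.Language.{u, u}} {M : Type u} [L.Structure M] {k nx : ℕ}
  {ny : Fin k → ℕ} (φ : L.Formula (Fin nx ⊕ ((ℓ : Fin k) × Fin (ny ℓ))))

/-- The instances `φ(x̄, ā_{0,η(0)}, …, ā_{k-1,η(k-1)})`, `η ∈ S`, form an independent
sequence. -/
def IsIndependentOn {ι : Type*} (a : (ℓ : Fin k) → ι → Fin (ny ℓ) → M)
    (S : Set (Fin k → ι)) : Prop :=
  ∀ (u : Set (Fin k → ι)) (s : Finset (Fin k → ι)), ↑s ⊆ S → ∃ x : Fin nx → M,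
    ∀ η ∈ s, (φ.Realize (Sum.elim x fun p => a p.1 (η p.1) p.2) ↔ η ∈ u)

variable {φ}

theorem IsIndependentOn.of_subtype {ι : Type*} {a : (ℓ : Fin k) → ι → Fin (ny ℓ) → M}
    {S : Set (Fin k → ι)}
    (h : ∀ (u : Set S) (s : Finset S), ∃ x : Fin nx → M,
      ∀ η ∈ s, (φ.Realize (Sum.elim x fun p => a p.1 (η.val p.1) p.2) ↔ η ∈ u)) :
    IsIndependentOn φ a S := by
  classical
  intro u s hs
  obtain ⟨x, hx⟩ := h (Subtype.val ⁻¹' u) (s.subtype (· ∈ S))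
  exact ⟨x, fun η hη => hx ⟨η, hs hη⟩ (Finset.mem_subtype.2 hη)⟩

theorem IsIndependentOn.comp {ι ι' : Type*} {a : (ℓ : Fin k) → ι → Fin (ny ℓ) → M}
    {S : Set (Fin k → ι)} (h : IsIndependentOn φ a S) (τ : Fin k → ι' → ι)
    {S' : Set (Fin k → ι')} (hmaps : MapsTo (fun η ℓ => τ ℓ (η ℓ)) S' S)
    (hinj : InjOn (fun η ℓ => τ ℓ (η ℓ)) S') :
    IsIndependentOn φ (fun ℓ i => a ℓ (τ ℓ i)) S' := by
  classical
  intro u s hs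
  obtain ⟨x, hx⟩ := h ((fun η ℓ => τ ℓ (η ℓ)) '' (u ∩ S')) (s.image fun η ℓ => τ ℓ (η ℓ))
    (by simpa using hmaps.mono_left hs |>.image_subset)
  refine ⟨x, fun η hη => (hx _ (Finset.mem_image_of_mem _ hη)).trans ?_⟩
  rw [hinj.mem_image_iff inter_subset_right (hs hη)]
  exact and_iff_left (hs hη)

/-- Spreading the `ℓ`-th coordinate into the `ℓ`-th block of `n` indices makes every index
function strictly increasing. -/
theorem exists_isIndependentOn_univ_of_strictMono
    (h : ∀ n : ℕ, ∃ a : (ℓ : Fin k) → Fin n → Fin (ny ℓ) → M,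
      IsIndependentOn φ a {η | StrictMono η}) (n : ℕ) :
    ∃ a : (ℓ : Fin k) → Fin n → Fin (ny ℓ) → M, IsIndependentOn φ a univ := by
  obtain ⟨a, ha⟩ := h (k * n)
  refine ⟨_, ha.comp (fun ℓ m => finProdFinEquiv (ℓ, m)) (fun η _ ℓ₁ ℓ₂ hℓ => ?_) ?_⟩
  · have h₁ := (η ℓ₁).isLt
    have h₂ : (ℓ₁ : ℕ) + 1 ≤ ℓ₂ := hℓ
    simp only [Fin.lt_def, finProdFinEquiv_apply_val]
    nlinarith
  · exact fun η _ η' _ hηη' => funext fun ℓ =>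
      congrArg Prod.snd (finProdFinEquiv.injective (congrFun hηη' ℓ))

theorem exists_isIndependentOn_pi
    (h : ∀ n : ℕ, ∃ a : (ℓ : Fin k) → Fin n → Fin (ny ℓ) → M, IsIndependentOn φ a univ)
    {ι : Type*} (I : Finset ι) :
    ∃ a : (ℓ : Fin k) → ι → Fin (ny ℓ) → M, IsIndependentOn φ a (univ.pi fun _ => ↑I) := by
  classical
  obtain ⟨a, ha⟩ := h (I.card + 1)
  let τ : ι → Fin (I.card + 1) := fun i =>
    if hi : i ∈ I then (I.equivFin ⟨i, hi⟩).castSucc else Fin.last _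
  have hτ : InjOn τ I := fun i hi j hj hij => by
    rw [Finset.mem_coe] at hi hj
    simpa only [τ, dif_pos hi, dif_pos hj, Fin.castSucc_inj, EmbeddingLike.apply_eq_iff_eq,
      Subtype.mk.injEq] using hij
  exact ⟨_, ha.comp (fun _ => τ) (mapsTo_univ _ _) fun η hη η' hη' hηη' =>
    funext fun ℓ => hτ (hη ℓ trivial) (hη' ℓ trivial) (congrFun hηη' ℓ)⟩

variable (φ) in
open Classical in
/-- The formula in the array variables `((ℓ, j), i) ↔ (ā_{ℓ,i})_j` stating that the pattern `u`
on the instances indexed by `s` is consistent. -/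
noncomputable def patternFormula {ι : Type u} (s : Finset (Fin k → ι)) (u : Set (Fin k → ι)) :
    L.Formula (((ℓ : Fin k) × Fin (ny ℓ)) × ι) :=
  Formula.iExs (Fin nx) <| Formula.iInf fun η : s =>
    let φη := φ.relabel (Sum.elim Sum.inr fun p => Sum.inl (p, η.1 p.1))
    if η.1 ∈ u then φη else φη.not

theorem realize_patternFormula {ι : Type u} (s : Finset (Fin k → ι)) (u : Set (Fin k → ι))
    (c : ((ℓ : Fin k) × Fin (ny ℓ)) × ι → M) :
    (patternFormula φ s u).Realize c ↔ ∃ x : Fin nx → M,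
      ∀ η ∈ s, (φ.Realize (Sum.elim x fun p => c (p, η p.1)) ↔ η ∈ u) := by
  classical
  have hinstance : ∀ (x : Fin nx → M) (η : Fin k → ι),
      (φ.relabel (Sum.elim Sum.inr fun p => Sum.inl (p, η p.1))).Realize (Sum.elim c x) ↔
        φ.Realize (Sum.elim x fun p => c (p, η p.1)) := fun x η => by
    rw [Formula.realize_relabel]
    exact iff_of_eq (congrArg _ (by ext (_ | _) <;> rfl))
  have hsign : ∀ (ψ : L.Formula ((((ℓ : Fin k) × Fin (ny ℓ)) × ι) ⊕ Fin nx)) (v : _ → M)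
      (P : Prop) [Decidable P],
      (if P then ψ else ψ.not).Realize v ↔ (ψ.Realize v ↔ P) := fun ψ v P _ => by
    split_ifs with hP <;> simp [hP, Formula.realize_not]
  simp only [patternFormula, Formula.realize_iExs, Formula.realize_iInf, hsign, hinstance,
    Subtype.forall]

theorem exists_realize_patternFormula {ι : Type u}
    (h : ∀ n : ℕ, ∃ a : (ℓ : Fin k) → Fin n → Fin (ny ℓ) → M, IsIndependentOn φ a univ)
    (t : Finset (Finset (Fin k → ι) × Set (Fin k → ι))) :
    ∃ d : ((ℓ : Fin k) × Fin (ny ℓ)) × ι → M,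
      ∀ q ∈ t, (patternFormula φ q.1 q.2).Realize d := by
  classical
  obtain ⟨a, ha⟩ := exists_isIndependentOn_pi h (t.biUnion fun q => q.1.biUnion fun η =>
    Finset.univ.image η)
  refine ⟨fun w => a w.1.1 w.2 w.1.2, fun q hq => (realize_patternFormula _ _ _).2 ?_⟩
  refine ha q.2 q.1 fun η hη ℓ _ => ?_
  simp only [Finset.coe_biUnion, Finset.coe_image, Finset.coe_univ, mem_iUnion, mem_image]
  exact ⟨q, hq, η, hη, ℓ, trivial, rfl⟩

end Independence

theorem observation_nd17_4_general
    {L : FirstOrder.Language.{u, u}} {M : Type u} [L.Structure M]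
    (κbar : Cardinal.{u}) (hκT : theoryCard L < κbar)
    (hκsat : Saturated L M κbar)
    (k nx : ℕ) (ny : Fin k → ℕ)
    (φ : L.Formula (Fin nx ⊕ ((ℓ : Fin k) × Fin (ny ℓ))))
    (hinc : ∀ n : ℕ, ∃ a : (ℓ : Fin k) → Fin n → Fin (ny ℓ) → M,
      ∀ (u : Set {η : Fin k → Fin n // StrictMono η})
        (s : Finset {η : Fin k → Fin n // StrictMono η}),
        ∃ x : Fin nx → M,
          ∀ η ∈ s, ((φ.Realize (Sum.elim x fun p => a p.1 (η.val p.1) p.2)) ↔ η ∈ u)) :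
    FormulaKIndep M κbar k nx ny φ := by
  have hfin := exists_isIndependentOn_univ_of_strictMono fun n =>
    (hinc n).imp fun _ ha => IsIndependentOn.of_subtype ha
  intro ι hι
  have hV : #(((ℓ : Fin k) × Fin (ny ℓ)) × ι) < κbar := by
    have hℵ₀ : ℵ₀ < κbar := le_sup_left.trans_lt hκT
    rw [mk_prod, lift_uzero]
    exact mul_lt_of_lt hℵ₀.le ((lift_lt_aleph0.2 (lt_aleph0_of_finite _)).trans hℵ₀) hι
  obtain ⟨c, hc⟩ := hκsat.exists_realize hV
    (fun q : Finset (Fin k → ι) × Set (Fin k → ι) => patternFormula φ q.1 q.2)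
    (exists_realize_patternFormula hfin)
  exact ⟨fun ℓ i j => c (⟨ℓ, j⟩, i), fun u s => (realize_patternFormula s u c).1 (hc (s, u))⟩

/-- Observation 2.7(4) of [Sh:886]: in the definition of a `k`-independent formula one may
restrict to increasing index functions: `φ` is `k`-independent provided that for every `n`
there are tuples `ā_{ℓ,m}` (`m < n`, `ℓ < k`) such that
`⟨φ(x̄, ā_{0,η(0)}, …, ā_{k-1,η(k-1)}) : η ∈ inc_k(n)⟩` is independent. -/
theorem observation_nd17_4
    {L : FirstOrder.Language.{u, u}} {M : Type u} [L.Structure M]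
    (κbar : Cardinal.{u}) (hκinacc : κbar.IsInaccessible) (hκT : theoryCard L < κbar)
    (hκsat : Saturated L M κbar)
    (k nx : ℕ) (ny : Fin k → ℕ)
    (φ : L.Formula (Fin nx ⊕ ((ℓ : Fin k) × Fin (ny ℓ))))
    (hinc : ∀ n : ℕ, ∃ a : (ℓ : Fin k) → Fin n → Fin (ny ℓ) → M,
      ∀ (u : Set {η : Fin k → Fin n // StrictMono η})
        (s : Finset {η : Fin k → Fin n // StrictMono η}),
        ∃ x : Fin nx → M,
          ∀ η ∈ s, ((φ.Realize (Sum.elim x fun p => a p.1 (η.val p.1) p.2)) ↔ η ∈ u)) :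
    FormulaKIndep M κbar k nx ny φ :=
  observation_nd17_4_general κbar hκT hκsat k nx ny φ hinc

end Paper886
end
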